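/- arXiv:1204.3210 — 2 statements merged into one kernel-verified Lean document; each statement's English description precedes it below -/
import Mathlib

section
/- Fix g > 0. Let h_L ≥ 0, h_R ≥ 0, u_L, u_R ∈ ℝ, q_L = h_L u_L, q_R = h_R u_R, and let c₁, c₂ be real numbers with c₁ ≤ u_L - √(g h_L), c₂ ≥ u_R + √(g h_R) and c₁ < c₂. Then the HLL intermediate water height h* := ( c₂ h_R - c₁ h_L - (q_R - q_L) ) / (c₂ - c₁) is nonnegative: h* ≥ 0. (Hence the HLL approximate Riemann solver for the Shallow Water system preserves nonnegativity of the water height.) -/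
/-- The HLL intermediate water height
`h* = (c₂ h_R - c₁ h_L - (q_R - q_L))/(c₂ - c₁)` is nonnegative whenever the
wave speeds satisfy `c₁ ≤ u_L - √(g h_L)` and `c₂ ≥ u_R + √(g h_R)` with
`c₁ < c₂`: the HLL solver preserves nonnegativity of the water height. -/
theorem hll_intermediate_height_nonneg
    (g hL hR uL uR c₁ c₂ : ℝ) (hg : 0 < g)
    (hhL : 0 ≤ hL) (hhR : 0 ≤ hR)
    (hc₁ : c₁ ≤ uL - Real.sqrt (g * hL))
    (hc₂ : uR + Real.sqrt (g * hR) ≤ c₂)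
    (hcc : c₁ < c₂) :
    0 ≤ (c₂ * hR - c₁ * hL - (hR * uR - hL * uL)) / (c₂ - c₁) := by
  apply div_nonneg _ (by linarith)
  have sL := Real.sqrt_nonneg (g * hL)
  have sR := Real.sqrt_nonneg (g * hR)
  have h1 : 0 ≤ hR * (c₂ - uR) := mul_nonneg hhR (by linarith)
  have h2 : 0 ≤ hL * (uL - c₁) := mul_nonneg hhL (by linarith)
  nlinarith
end

section
/- Let Δx > 0, h_i > 0, u_i ∈ ℝ, and let Du_i ∈ ℝ be any slope. Let h_{i-1/2+}, h_{i+1/2-} ≥ 0 be reconstructed water heights satisfying the conservation property h_{i-1/2+} + h_{i+1/2-} = 2 h_i. Define the modified velocity reconstruction u_{i-1/2+} = u_i - (h_{i+1/2-}/h_i)(Δx/2) Du_i and u_{i+1/2-} = u_i + (h_{i-1/2+}/h_i)(Δx/2) Du_i. Then the reconstruction conserves the discharge: h_{i-1/2+} u_{i-1/2+} + h_{i+1/2-} u_{i+1/2-} = 2 h_i u_i. -/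
/-- The modified MUSCL velocity reconstruction of FullSWOF conserves the
discharge: `h_{i-1/2+} u_{i-1/2+} + h_{i+1/2-} u_{i+1/2-} = 2 h_i u_i`. -/
theorem modified_velocity_reconstruction_conserves_discharge
    (Δx hi ui Dui hL hR : ℝ)
    (hΔx : 0 < Δx) (hhi : 0 < hi) (hhL : 0 ≤ hL) (hhR : 0 ≤ hR)
    (hcons : hL + hR = 2 * hi) :
    hL * (ui - hR / hi * (Δx / 2) * Dui)
      + hR * (ui + hL / hi * (Δx / 2) * Dui) = 2 * (hi * ui) := by
  linear_combination ui * hcons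
end
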